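/- For |q|<1 and parameters in the region of validity (a ≠ q^{-1}, x ≠ 0), the series ₁φ₁ satisfies the recurrence with unshifted argument: ₁φ₁(aq²; cq²; q, x) = [(1−cq)((1−c)q + x) / ((1−aq)x)] · ₁φ₁(aq; cq; q, x) − [(1−c)(1−cq)q / ((1−aq)x)] · ₁φ₁(a; c; q, x). -/

import Mathlib

open scoped BigOperators

/-- q-shifted factorial (a;q)_j -/
noncomputable def qPoch (a q : ℂ) (j : ℕ) : ℂ :=
  ∏ i ∈ Finset.range j, (1 - a * q ^ i)

/-- infinite q-shifted factorial (a;q)_∞ -/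
noncomputable def qPochInf (a q : ℂ) : ℂ :=
  ∏' j : ℕ, (1 - a * q ^ j)

/-- basic hypergeometric series ₁φ₁(a; c; q, x) -/
noncomputable def phi11 (a c q x : ℂ) : ℂ :=
  ∑' j : ℕ, qPoch a q j / (qPoch q q j * qPoch c q j) *
    (-1) ^ j * q ^ (j * (j - 1) / 2) * x ^ j

/-- basic hypergeometric series ₀φ₁(–; c; q, x) -/
noncomputable def phi01 (c q x : ℂ) : ℂ :=
  ∑' j : ℕ, q ^ (j * (j - 1)) * x ^ j / (qPoch q q j * qPoch c q j)

/-- basic hypergeometric series ₂φ₁(a, b; c; q, x) -/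
noncomputable def phi21 (a b c q x : ℂ) : ℂ :=
  ∑' j : ℕ, qPoch a q j * qPoch b q j / (qPoch q q j * qPoch c q j) * x ^ j

/-!
Both sides are compared with the auxiliary series `ψ = ₁φ₁(aq; cq²; q, qx)`. Term by term,
`(1 - aq) ₁φ₁(aq², cq²) - (1 - cq) ₁φ₁(aq, cq) = (c - a) q ψ`,
while after the index shift `j ↦ j + 1` (the `j = 0` terms cancel)
`(1 - c)(1 - cq) (₁φ₁(aq, cq) - ₁φ₁(a, c)) = (c - a) x ψ`.
Eliminating `ψ` gives the recurrence.
-/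

open Filter Topology

lemma qPoch_zero (a q : ℂ) : qPoch a q 0 = 1 := Finset.prod_range_zero _

lemma qPoch_succ (a q : ℂ) (j : ℕ) :
    qPoch a q (j + 1) = qPoch a q j * (1 - a * q ^ j) :=
  Finset.prod_range_succ _ _

lemma qPoch_succ' (a q : ℂ) (j : ℕ) :
    qPoch a q (j + 1) = (1 - a) * qPoch (a * q) q j := by
  simp only [qPoch, Finset.prod_range_succ', pow_succ, pow_zero, mul_one, mul_assoc, mul_comm]

lemma qPoch_ne_zero {a q : ℂ} (ha : ∀ n : ℕ, a * q ^ n ≠ 1) (j : ℕ) : qPoch a q j ≠ 0 :=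
  Finset.prod_ne_zero_iff.2 fun n _ => sub_ne_zero.2 (ha n).symm

lemma mul_pow_ne_one_of_norm_lt_one {q : ℂ} (hq : ‖q‖ < 1) (n : ℕ) : q * q ^ n ≠ 1 := by
  intro h
  have := congrArg norm h
  rw [← pow_succ', norm_pow, norm_one] at this
  exact (pow_lt_one₀ (norm_nonneg q) hq n.succ_ne_zero).ne this

lemma mul_mul_pow_ne_one {c q : ℂ} (hc : ∀ n : ℕ, c * q ^ n ≠ 1) (n : ℕ) :
    c * q * q ^ n ≠ 1 := by
  rw [mul_assoc, ← pow_succ']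
  exact hc (n + 1)

noncomputable def phi11Weight (q x : ℂ) (j : ℕ) : ℂ :=
  (-1) ^ j * q ^ (j * (j - 1) / 2) * x ^ j / qPoch q q j

noncomputable def phi11Term (a c q x : ℂ) (j : ℕ) : ℂ :=
  qPoch a q j / qPoch c q j * phi11Weight q x j

lemma phi11_eq_tsum (a c q x : ℂ) : phi11 a c q x = ∑' j, phi11Term a c q x j := by
  unfold phi11 phi11Term phi11Weight
  congr 1 with j
  ring

lemma phi11Weight_mul_left (q x : ℂ) (j : ℕ) :
    phi11Weight q (q * x) j = q ^ j * phi11Weight q x j := by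
  unfold phi11Weight
  ring

lemma phi11Weight_succ {q : ℂ} (hq : ‖q‖ < 1) (x : ℂ) (j : ℕ) :
    phi11Weight q x (j + 1) = -(q ^ j * x) / (1 - q * q ^ j) * phi11Weight q x j := by
  have hq' : 1 - q * q ^ j ≠ 0 := sub_ne_zero.2 (mul_pow_ne_one_of_norm_lt_one hq j).symm
  unfold phi11Weight
  rw [qPoch_succ, Nat.triangle_succ]
  field_simp
  ring

lemma phi11Term_succ {q : ℂ} (hq : ‖q‖ < 1) {c : ℂ} (hc : ∀ n : ℕ, c * q ^ n ≠ 1)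
    (a x : ℂ) (j : ℕ) :
    phi11Term a c q x (j + 1) =
      (1 - a * q ^ j) * -(q ^ j * x) / ((1 - c * q ^ j) * (1 - q * q ^ j)) *
        phi11Term a c q x j := by
  have hc' : 1 - c * q ^ j ≠ 0 := sub_ne_zero.2 (hc j).symm
  have hC := qPoch_ne_zero hc j
  unfold phi11Term
  rw [qPoch_succ, qPoch_succ, phi11Weight_succ hq]
  field_simp

lemma summable_phi11Term {q : ℂ} (hq : ‖q‖ < 1) {c : ℂ} (hc : ∀ n : ℕ, c * q ^ n ≠ 1)
    (a x : ℂ) : Summable (phi11Term a c q x) := by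
  refine summable_of_ratio_norm_eventually_le (r := 1 / 2) (by norm_num) ?_
  have hpow : Tendsto (fun j : ℕ => q ^ j) atTop (𝓝 0) :=
    tendsto_pow_atTop_nhds_zero_of_norm_lt_one hq
  have hratio : Tendsto
      (fun j : ℕ => (1 - a * q ^ j) * -(q ^ j * x) / ((1 - c * q ^ j) * (1 - q * q ^ j)))
      atTop (𝓝 0) := by
    have hone : Tendsto (fun _ : ℕ => (1 : ℂ)) atTop (𝓝 1) := tendsto_const_nhds
    have hnum := (hone.sub (hpow.const_mul a)).mul (hpow.mul_const x).neg
    have hden := (hone.sub (hpow.const_mul c)).mul (hone.sub (hpow.const_mul q))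
    simpa [Pi.div_def] using hnum.div hden (by simp)
  filter_upwards [hratio.norm.eventually_le_const (by norm_num : ‖(0 : ℂ)‖ < 1 / 2)] with j hj
  rw [phi11Term_succ hq hc, norm_mul]
  exact mul_le_mul_of_nonneg_right hj (norm_nonneg _)

lemma one_sub_mul_phi11Term_sub {q c : ℂ} (hc : ∀ n : ℕ, c * q ^ n ≠ 1) (a x : ℂ) (j : ℕ) :
    (1 - a) * phi11Term (a * q) (c * q) q x j - (1 - c) * phi11Term a c q x j =
      (c - a) * phi11Term a (c * q) q (q * x) j := by
  have hA : (1 - a) * qPoch (a * q) q j = qPoch a q j * (1 - a * q ^ j) := by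
    rw [← qPoch_succ', qPoch_succ]
  have hC : (1 - c) * qPoch (c * q) q j = qPoch c q j * (1 - c * q ^ j) := by
    rw [← qPoch_succ', qPoch_succ]
  have hC₀ := qPoch_ne_zero hc j
  have hC₁ : qPoch (c * q) q j ≠ 0 := qPoch_ne_zero (mul_mul_pow_ne_one hc) j
  unfold phi11Term
  rw [phi11Weight_mul_left]
  generalize qPoch (c * q) q j = C₁ at hC hC₁ ⊢
  field_simp
  linear_combination phi11Weight q x j * (qPoch c q j * hA - qPoch a q j * hC)

lemma phi11Term_succ_sub {q : ℂ} (hq : ‖q‖ < 1) {c : ℂ} (hc : ∀ n : ℕ, c * q ^ n ≠ 1)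
    (a x : ℂ) (j : ℕ) :
    (1 - c) * (1 - c * q) *
        (phi11Term (a * q) (c * q) q x (j + 1) - phi11Term a c q x (j + 1)) =
      (c - a) * x * phi11Term (a * q) (c * q ^ 2) q (q * x) j := by
  have hc₀ : 1 - c ≠ 0 := sub_ne_zero.2 (by simpa using (hc 0).symm)
  have hc₁ : 1 - c * q ≠ 0 := sub_ne_zero.2 (by simpa using (hc 1).symm)
  have hcj : 1 - c * q * q ^ j ≠ 0 := sub_ne_zero.2 (mul_mul_pow_ne_one hc j).symm
  have hqj : 1 - q * q ^ j ≠ 0 := sub_ne_zero.2 (mul_pow_ne_one_of_norm_lt_one hq j).symm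
  have hC₁ : qPoch (c * q) q j ≠ 0 := qPoch_ne_zero (mul_mul_pow_ne_one hc) j
  have hC₂ :
      qPoch (c * q ^ 2) q j = qPoch (c * q) q j * (1 - c * q * q ^ j) / (1 - c * q) := by
    rw [eq_div_iff hc₁, sq, ← mul_assoc, mul_comm, ← qPoch_succ', qPoch_succ]
  unfold phi11Term
  rw [qPoch_succ (a * q), qPoch_succ' (c * q), qPoch_succ' a, qPoch_succ' c,
    phi11Weight_succ hq, phi11Weight_mul_left, mul_assoc c q q, ← sq, hC₂]
  field_simp
  ring

lemma one_sub_mul_phi11_sub {q : ℂ} (hq : ‖q‖ < 1) {c : ℂ} (hc : ∀ n : ℕ, c * q ^ n ≠ 1)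
    (a x : ℂ) :
    (1 - a) * phi11 (a * q) (c * q) q x - (1 - c) * phi11 a c q x =
      (c - a) * phi11 a (c * q) q (q * x) := by
  have hcq := mul_mul_pow_ne_one hc
  simp only [phi11_eq_tsum, ← tsum_mul_left]
  rw [← ((summable_phi11Term hq hcq _ _).mul_left _).tsum_sub
    ((summable_phi11Term hq hc _ _).mul_left _)]
  exact tsum_congr (one_sub_mul_phi11Term_sub hc a x)

lemma phi11_sub {q : ℂ} (hq : ‖q‖ < 1) {c : ℂ} (hc : ∀ n : ℕ, c * q ^ n ≠ 1) (a x : ℂ) :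
    (1 - c) * (1 - c * q) * (phi11 (a * q) (c * q) q x - phi11 a c q x) =
      (c - a) * x * phi11 (a * q) (c * q ^ 2) q (q * x) := by
  have hcq := mul_mul_pow_ne_one hc
  have hsum := (summable_phi11Term hq hcq (a * q) x).sub (summable_phi11Term hq hc a x)
  have hzero : phi11Term (a * q) (c * q) q x 0 - phi11Term a c q x 0 = 0 := by
    simp [phi11Term, qPoch_zero]
  simp only [phi11_eq_tsum]
  rw [← (summable_phi11Term hq hcq _ _).tsum_sub (summable_phi11Term hq hc _ _),
    hsum.tsum_eq_zero_add, hzero, zero_add, ← tsum_mul_left, ← tsum_mul_left]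
  exact tsum_congr (phi11Term_succ_sub hq hc a x)

theorem phi11_three_term_recurrence_220 (q a c x : ℂ) (hq : ‖q‖ < 1)
    (hc : ∀ n : ℕ, c * q ^ n ≠ 1)
    (ha : a * q ≠ 1) (hx : x ≠ 0) :
    phi11 (a * q ^ 2) (c * q ^ 2) q x
      = (1 - c * q) * ((1 - c) * q + x) / ((1 - a * q) * x)
          * phi11 (a * q) (c * q) q x
        - (1 - c) * (1 - c * q) * q / ((1 - a * q) * x)
          * phi11 a c q x := by
  have haq : 1 - a * q ≠ 0 := sub_ne_zero.2 ha.symm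
  have hcq := mul_mul_pow_ne_one hc
  have hshift := one_sub_mul_phi11_sub hq hcq (a * q) x
  have hdiff := phi11_sub hq hc a x
  simp only [mul_assoc, ← sq] at hshift
  rw [div_mul_eq_mul_div, div_mul_eq_mul_div, ← sub_div, eq_div_iff (mul_ne_zero haq hx)]
  linear_combination x * hshift - q * hdiff
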